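/- arXiv:2206.09239 — 4 statements merged into one kernel-verified Lean document; each statement's English description precedes it below -/
import Mathlib

section
/- Let n ∈ ℕ, Γ ∈ ℕ, and for each t ∈ Fin n let f_t : ℝ → ℝ be either convex on [0,1] or antitone on [0,1]. Then there exists x* ∈ (Fin n → ℝ) with x*_t ∈ {0,1} for all t and Σ_t x*_t ≤ Γ such that for every x ∈ (Fin n → ℝ) with 0 ≤ x_t ≤ 1 for all t and Σ_t x_t ≤ Γ, one has Σ_t f_t(x_t) ≤ Σ_t f_t(x*_t). -/
/-!
For an integer budget `Γ`, the budgeted box `{x ∈ [0,1]ⁿ | ∑ x ≤ Γ}` is the convex hull of its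
binary points. A point with two fractional coordinates `s ≠ t` lies on a segment in direction
`e s - e t` between two feasible points with fewer fractional coordinates. A point with a single
fractional coordinate lies between its roundings down and up, and the rounding up is feasible
because its coordinate sum is an integer below `Γ + 1`.

Replacing each antitone `f t` by the constant `f t 0` gives a convex separable majorant `G` of
`F x = ∑ t, f t (x t)`. By the maximum principle, `G x ≤ G y` for some feasible binary `y`. Zeroing
the replaced coordinates of `y` gives a feasible binary `y'` with `G y ≤ F y'`.
-/

open Set Finset

theorem mem_segment_add_smul_add_smul {E : Type*} [AddCommGroup E] [Module ℝ E] (x d : E)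
    {m p : ℝ} (hm : m ≤ 0) (hp : 0 ≤ p) : x ∈ segment ℝ (x + m • d) (x + p • d) := by
  have h₀ : (0 : ℝ) ∈ segment ℝ m p := by
    rw [segment_eq_Icc (hm.trans hp)]
    exact ⟨hm, hp⟩
  have := image_segment ℝ (AffineMap.lineMap x (x + d)) m p ▸ mem_image_of_mem _ h₀
  simpa [AffineMap.lineMap_apply, add_comm] using this

section BudgetedBox

variable {ι : Type*} [Fintype ι]

def budgetedBox (Γ : ℝ) : Set (ι → ℝ) := {x | (∀ t, 0 ≤ x t ∧ x t ≤ 1) ∧ ∑ t, x t ≤ Γ}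

noncomputable def fractionalCoords (x : ι → ℝ) : Finset ι := {t | x t ≠ 0 ∧ x t ≠ 1}

theorem mem_fractionalCoords {x : ι → ℝ} {t : ι} :
    t ∈ fractionalCoords x ↔ x t ≠ 0 ∧ x t ≠ 1 := by
  simp [fractionalCoords]

theorem mem_Ioo_of_mem_fractionalCoords {Γ : ℝ} {x : ι → ℝ} (hx : x ∈ budgetedBox Γ) {t : ι}
    (ht : t ∈ fractionalCoords x) : 0 < x t ∧ x t < 1 :=
  have h := mem_fractionalCoords.1 ht
  ⟨(hx.1 t).1.lt_of_ne' h.1, (hx.1 t).2.lt_of_ne h.2⟩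

theorem fractionalCoords_ssubset {x y : ι → ℝ} (hyx : ∀ t ∉ fractionalCoords x, y t = x t)
    {t : ι} (ht : t ∈ fractionalCoords x) (hy : y t = 0 ∨ y t = 1) :
    fractionalCoords y ⊂ fractionalCoords x := by
  refine (Finset.ssubset_iff_of_subset fun s hs => ?_).2 ⟨t, ht, ?_⟩
  · by_contra hs'
    rw [mem_fractionalCoords, hyx s hs'] at hs
    exact hs' (mem_fractionalCoords.2 hs)
  · rw [mem_fractionalCoords]
    tauto

theorem sum_eq_card_of_binary {y : ι → ℝ} (hy : ∀ t, y t = 0 ∨ y t = 1) :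
    ∑ t, y t = #{t | y t = 1} := by
  rw [Finset.natCast_card_filter]
  refine Finset.sum_congr rfl fun t _ => ?_
  rcases hy t with h | h <;> simp [h]

theorem mem_budgetedBox_of_le {Γ : ℝ} {x y : ι → ℝ} (hx : x ∈ budgetedBox Γ) (hy : 0 ≤ y)
    (hyx : y ≤ x) : y ∈ budgetedBox Γ :=
  ⟨fun t => ⟨hy t, (hyx t).trans (hx.1 t).2⟩, (Finset.sum_le_sum fun t _ => hyx t).trans hx.2⟩

variable [DecidableEq ι]

theorem exists_segment_of_two_fractionalCoords {Γ : ℝ} {x : ι → ℝ} (hx : x ∈ budgetedBox Γ)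
    {t₀ t₁ : ι} (hne : t₀ ≠ t₁) (h₀ : t₀ ∈ fractionalCoords x) (h₁ : t₁ ∈ fractionalCoords x) :
    ∃ y ∈ budgetedBox Γ, ∃ z ∈ budgetedBox Γ, fractionalCoords y ⊂ fractionalCoords x ∧
      fractionalCoords z ⊂ fractionalCoords x ∧ x ∈ segment ℝ y z := by
  have ha := mem_Ioo_of_mem_fractionalCoords hx h₀
  have hb := mem_Ioo_of_mem_fractionalCoords hx h₁
  set d : ι → ℝ := Pi.single t₀ 1 - Pi.single t₁ 1
  have hcoord : ∀ (s : ℝ) t, (x + s • d) t =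
      if t = t₀ then x t₀ + s else if t = t₁ then x t₁ - s else x t := by
    intro s t
    rcases eq_or_ne t t₀ with rfl | h
    · simp [d, hne]
    rcases eq_or_ne t t₁ with rfl | h'
    · simp [d, h, sub_eq_add_neg]
    · simp [d, h, h']
  set m := min (x t₀) (1 - x t₁)
  set p := min (1 - x t₀) (x t₁)
  have hm : 0 ≤ m ∧ m ≤ x t₀ ∧ m ≤ 1 - x t₁ :=
    ⟨le_min ha.1.le (by linarith), min_le_left _ _, min_le_right _ _⟩
  have hp : 0 ≤ p ∧ p ≤ 1 - x t₀ ∧ p ≤ x t₁ :=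
    ⟨le_min (by linarith) hb.1.le, min_le_left _ _, min_le_right _ _⟩
  have hmem : ∀ s, -m ≤ s → s ≤ p → x + s • d ∈ budgetedBox Γ := by
    intro s hs₁ hs₂
    refine ⟨fun t => ?_, ?_⟩
    · rw [hcoord]
      split_ifs
      · constructor <;> linarith
      · constructor <;> linarith
      · exact hx.1 t
    · simpa [d, Finset.sum_add_distrib, ← Finset.mul_sum, Finset.sum_sub_distrib] using hx.2
  have hfrac : ∀ s : ℝ, ∀ t ∉ fractionalCoords x, (x + s • d) t = x t := by
    intro s t ht
    rw [hcoord, if_neg (by rintro rfl; exact ht h₀), if_neg (by rintro rfl; exact ht h₁)]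
  refine ⟨x + (-m : ℝ) • d, hmem _ le_rfl (by linarith), x + p • d, hmem _ (by linarith) le_rfl,
    ?_, ?_, mem_segment_add_smul_add_smul x d (by linarith) hp.1⟩
  · rcases min_choice (x t₀) (1 - x t₁) with h | h
    · refine fractionalCoords_ssubset (hfrac _) h₀ (.inl ?_)
      rw [hcoord, if_pos rfl, show m = x t₀ from h]
      ring
    · refine fractionalCoords_ssubset (hfrac _) h₁ (.inr ?_)
      rw [hcoord, if_neg hne.symm, if_pos rfl, show m = 1 - x t₁ from h]
      ring
  · rcases min_choice (1 - x t₀) (x t₁) with h | h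
    · refine fractionalCoords_ssubset (hfrac _) h₀ (.inr ?_)
      rw [hcoord, if_pos rfl, show p = 1 - x t₀ from h]
      ring
    · refine fractionalCoords_ssubset (hfrac _) h₁ (.inl ?_)
      rw [hcoord, if_neg hne.symm, if_pos rfl, show p = x t₁ from h]
      ring

theorem exists_segment_of_one_fractionalCoord {Γ : ℕ} {x : ι → ℝ} (hx : x ∈ budgetedBox Γ)
    {t₀ : ι} (h₀ : t₀ ∈ fractionalCoords x) (hrest : ∀ t ≠ t₀, x t = 0 ∨ x t = 1) :
    ∃ y ∈ budgetedBox Γ, ∃ z ∈ budgetedBox Γ, fractionalCoords y ⊂ fractionalCoords x ∧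
      fractionalCoords z ⊂ fractionalCoords x ∧ x ∈ segment ℝ y z := by
  have ha := mem_Ioo_of_mem_fractionalCoords hx h₀
  set d : ι → ℝ := Pi.single t₀ 1
  have hcoord : ∀ (s : ℝ) t, (x + s • d) t = if t = t₀ then x t₀ + s else x t := by
    intro s t
    rcases eq_or_ne t t₀ with rfl | h
    · simp [d]
    · simp [d, h]
  have hfrac : ∀ s : ℝ, ∀ t ∉ fractionalCoords x, (x + s • d) t = x t := by
    intro s t ht
    rw [hcoord, if_neg (by rintro rfl; exact ht h₀)]
  have hy : x + (-x t₀) • d ∈ budgetedBox Γ := by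
    refine mem_budgetedBox_of_le hx (fun t => ?_) (fun t => ?_) <;> rw [hcoord] <;>
      split_ifs with h
    · simp
    · exact (hx.1 t).1
    · subst h; linarith
    · exact le_rfl
  have hz : x + (1 - x t₀) • d ∈ budgetedBox Γ := by
    have hbin : ∀ t, (x + (1 - x t₀) • d) t = 0 ∨ (x + (1 - x t₀) • d) t = 1 := by
      intro t
      rw [hcoord]
      split_ifs with h
      · exact .inr (by ring)
      · exact hrest t h
    refine ⟨fun t => ?_, ?_⟩
    · rcases hbin t with h | h <;> rw [h] <;> norm_num
    have hlt : ∑ t, (x + (1 - x t₀) • d) t < Γ + 1 := by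
      have : ∑ t, (x + (1 - x t₀) • d) t = ∑ t, x t + (1 - x t₀) := by
        simp [d, Finset.sum_add_distrib, ← Finset.mul_sum]
      linarith [hx.2]
    rw [sum_eq_card_of_binary hbin] at hlt ⊢
    exact_mod_cast Nat.lt_succ_iff.1 (by exact_mod_cast hlt)
  refine ⟨_, hy, _, hz, fractionalCoords_ssubset (hfrac _) h₀ (.inl ?_),
    fractionalCoords_ssubset (hfrac _) h₀ (.inr ?_),
    mem_segment_add_smul_add_smul x d (by linarith) (by linarith)⟩
  all_goals rw [hcoord, if_pos rfl]; ring

theorem exists_segment_of_fractionalCoords_nonempty {Γ : ℕ} {x : ι → ℝ}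
    (hx : x ∈ budgetedBox Γ) (hfrac : (fractionalCoords x).Nonempty) :
    ∃ y ∈ budgetedBox Γ, ∃ z ∈ budgetedBox Γ, fractionalCoords y ⊂ fractionalCoords x ∧
      fractionalCoords z ⊂ fractionalCoords x ∧ x ∈ segment ℝ y z := by
  obtain ⟨t₀, h₀⟩ := hfrac
  by_cases htwo : ∃ t₁ ∈ fractionalCoords x, t₁ ≠ t₀
  · obtain ⟨t₁, h₁, hne⟩ := htwo
    exact exists_segment_of_two_fractionalCoords hx hne.symm h₀ h₁
  · refine exists_segment_of_one_fractionalCoord hx h₀ fun t ht => ?_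
    by_contra h
    rw [not_or] at h
    exact htwo ⟨t, mem_fractionalCoords.2 h, ht⟩

theorem budgetedBox_subset_convexHull (Γ : ℕ) :
    budgetedBox (ι := ι) Γ ⊆ convexHull ℝ {x ∈ budgetedBox Γ | ∀ t, x t = 0 ∨ x t = 1} := by
  intro x hx
  induction hk : #(fractionalCoords x) using Nat.strong_induction_on generalizing x with
  | _ k ih =>
  obtain hempty | hfrac := (fractionalCoords x).eq_empty_or_nonempty
  · refine subset_convexHull ℝ _ ⟨hx, fun t => ?_⟩
    by_contra h
    rw [not_or] at h
    exact Finset.notMem_empty t (hempty ▸ mem_fractionalCoords.2 h)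
  obtain ⟨y, hy, z, hz, hyx, hzx, hxyz⟩ := exists_segment_of_fractionalCoords_nonempty hx hfrac
  subst hk
  exact (convex_convexHull ℝ _).segment_subset (ih _ (Finset.card_lt_card hyx) hy rfl)
    (ih _ (Finset.card_lt_card hzx) hz rfl) hxyz

end BudgetedBox

theorem convexOn_sum_comp_eval {ι : Type*} [Fintype ι] {s : Set ℝ} (hs : Convex ℝ s)
    {g : ι → ℝ → ℝ} (hg : ∀ t, ConvexOn ℝ s (g t)) :
    ConvexOn ℝ (Set.univ.pi fun _ => s) fun x => ∑ t, g t (x t) := by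
  have hpi : Convex ℝ (Set.univ.pi fun _ : ι => s) := convex_pi fun _ _ => hs
  have hterm : ∀ t, ConvexOn ℝ (Set.univ.pi fun _ : ι => s) fun x => g t (x t) := fun t =>
    ((hg t).comp_linearMap (LinearMap.proj (R := ℝ) (φ := fun _ : ι => ℝ) t)).subset
      (fun _ hx => hx t (Set.mem_univ t)) hpi
  have := Finset.sum_induction (fun t x => g t (x t)) (ConvexOn ℝ (Set.univ.pi fun _ => s))
    (fun _ _ => ConvexOn.add) (convexOn_const 0 hpi) (s := Finset.univ) fun t _ => hterm t
  simpa [Finset.sum_fn] using this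

theorem exists_convexOn_majorant {f : ℝ → ℝ}
    (hf : ConvexOn ℝ (Icc 0 1) f ∨ AntitoneOn f (Icc 0 1)) :
    ∃ g : ℝ → ℝ, ConvexOn ℝ (Icc 0 1) g ∧ (∀ x ∈ Icc (0 : ℝ) 1, f x ≤ g x) ∧
      ∀ y : ℝ, y = 0 ∨ y = 1 → ∃ y' : ℝ, (y' = 0 ∨ y' = 1) ∧ y' ≤ y ∧ g y ≤ f y' := by
  rcases hf with hf | hf
  · exact ⟨f, hf, fun _ _ => le_rfl, fun y hy => ⟨y, hy, le_rfl, le_rfl⟩⟩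
  · refine ⟨fun _ => f 0, convexOn_const _ (convex_Icc 0 1),
      fun x hx => hf (left_mem_Icc.2 zero_le_one) hx hx.1,
      fun y hy => ⟨0, .inl rfl, ?_, le_rfl⟩⟩
    rcases hy with rfl | rfl <;> norm_num

/-- Separable maximization over the budgeted box: if each f_t is convex or antitone
on [0,1], the maximum of Σ_t f_t(x_t) over {x ∈ [0,1]^n : Σ x_t ≤ Γ} (integer Γ) is
attained at a binary vector. -/
theorem stmt_10 (n Γ : ℕ) (f : Fin n → ℝ → ℝ)
    (hf : ∀ t, ConvexOn ℝ (Set.Icc (0 : ℝ) 1) (f t) ∨ AntitoneOn (f t) (Set.Icc (0 : ℝ) 1)) :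
    ∃ xstar : Fin n → ℝ, (∀ t, xstar t = 0 ∨ xstar t = 1) ∧ (∑ t, xstar t ≤ (Γ : ℝ)) ∧
      ∀ x : Fin n → ℝ, (∀ t, 0 ≤ x t ∧ x t ≤ 1) → (∑ t, x t ≤ (Γ : ℝ)) →
        ∑ t, f t (x t) ≤ ∑ t, f t (xstar t) := by
  set S : Set (Fin n → ℝ) := {x ∈ budgetedBox (Γ : ℝ) | ∀ t, x t = 0 ∨ x t = 1}
  have hSfin : S.Finite := (Set.Finite.pi (t := fun _ => ({0, 1} : Set ℝ))
    fun _ => by simp).subset fun x hx t _ => hx.2 t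
  obtain ⟨xstar, hxstar, hmax⟩ := S.exists_max_image (fun x => ∑ t, f t (x t)) hSfin
    ⟨0, ⟨fun _ => by simp, by simp⟩, fun _ => .inl rfl⟩
  refine ⟨xstar, hxstar.2, hxstar.1.2, fun x hx hsum => ?_⟩
  choose g hg_convex hfg hgf using fun t => exists_convexOn_majorant (hf t)
  obtain ⟨y, hyS, hxy⟩ :=
    (convexOn_sum_comp_eval (convex_Icc 0 1) hg_convex).exists_ge_of_mem_convexHull
      (fun y hy t _ => hy.1.1 t) (budgetedBox_subset_convexHull Γ ⟨hx, hsum⟩)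
  choose y' hy'_binary hy'y hgy' using fun t => hgf t (y t) (hyS.2 t)
  have hy'_nonneg : 0 ≤ y' := fun t => by rcases hy'_binary t with h | h <;> simp [h]
  have hy'S : y' ∈ S := ⟨mem_budgetedBox_of_le hyS.1 hy'_nonneg hy'y, hy'_binary⟩
  calc ∑ t, f t (x t) ≤ ∑ t, g t (x t) := Finset.sum_le_sum fun t _ => hfg t (x t) (hx t)
    _ ≤ ∑ t, g t (y t) := hxy
    _ ≤ ∑ t, f t (y' t) := Finset.sum_le_sum fun t _ => hgy' t
    _ ≤ ∑ t, f t (xstar t) := hmax y' hy'S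
end

section
/- Fix T ∈ ℕ and integer budgets Γ^A, Γ^D ∈ ℕ. Let A̲, ΔA : Fin T → ℝ satisfy ΔA_t ≥ 0 and A̲_t + ΔA_t < 360 for all t. Define 𝔸^R := {(α,γ) : 0 ≤ α_t ≤ 1 and 0 ≤ γ_t ≤ 1 for all t, Σ_t α_t ≤ Γ^A, Σ_t γ_t ≤ Γ^D} and 𝔸^{RB} := {(α,γ) ∈ 𝔸^R : every α_t and γ_t equals 0 or 1}. Let D be a nonempty set, Ξ : D → ℝ, and Φ, Ψ : D → (Fin T → ℝ). Define Obj(d, α, γ) := Ξ(d) + Σ_t (γ_t·Φ(d)_t + Ψ(d)_t) / (1.2 − (A̲_t + α_t·ΔA_t)/300). If the set {Obj(d,α,γ) : d ∈ D, (α,γ) ∈ 𝔸^R} is bounded above, then sup{Obj(d,α,γ) : d ∈ D, (α,γ) ∈ 𝔸^R} = sup{Obj(d,α,γ) : d ∈ D, (α,γ) ∈ 𝔸^{RB}}. -/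
open Finset

/-- The relaxed uncertainty set 𝔸^R (no correlation constraint). -/
def inAR (T ΓA ΓD : ℕ) (p : (Fin T → ℝ) × (Fin T → ℝ)) : Prop :=
  (∀ t, 0 ≤ p.1 t ∧ p.1 t ≤ 1) ∧ (∀ t, 0 ≤ p.2 t ∧ p.2 t ≤ 1) ∧
  (∑ t, p.1 t ≤ (ΓA : ℝ)) ∧ (∑ t, p.2 t ≤ (ΓD : ℝ))

/-- The binary restriction 𝔸^{RB} of 𝔸^R. -/
def inARB (T ΓA ΓD : ℕ) (p : (Fin T → ℝ) × (Fin T → ℝ)) : Prop :=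
  inAR T ΓA ΓD p ∧ (∀ t, p.1 t = 0 ∨ p.1 t = 1) ∧ (∀ t, p.2 t = 0 ∨ p.2 t = 1)

/-!
The objective is affine in the demand deviation `γ` and, coordinatewise, of the form
`c / (a - u b)` in the temperature deviation `u = α t`: convex when `c ≥ 0`, antitone when `c ≤ 0`.
A separable function whose summands are convex on `[0,1]` attains its maximum over the polytope
`{x ∈ [0,1]^T | ∑ x ≤ k}` at a vertex, and for integral `k` all vertices are `0/1` vectors:
a point with two fractional coordinates lies on a segment along `e_s - e_t` whose endpoints have
fewer fractional coordinates, and a point with a single fractional coordinate lies between the two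
roundings of that coordinate, both admissible because the remaining coordinates sum to an integer.
Rounding `γ` first and then `α` (antitone coordinates pushed to `0`) yields a binary scenario that
is at least as bad, so the two suprema coincide.
-/

theorem mem_segment_add_smul_sub_smul {𝕜 E : Type*} [Field 𝕜] [LinearOrder 𝕜]
    [IsStrictOrderedRing 𝕜] [AddCommGroup E] [Module 𝕜 E] (x v : E) {a b : 𝕜} (ha : 0 ≤ a)
    (hb : 0 ≤ b) : x ∈ segment 𝕜 (x + a • v) (x - b • v) := by
  rw [mem_segment_iff_sameRay]
  simpa [← neg_smul] using sameRay_smul_smul_of_mul_nonneg (v := v)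
    (mul_nonneg_of_nonpos_of_nonpos (neg_nonpos.2 ha) (neg_nonpos.2 hb))

theorem convexOn_div_sub_mul {a b c : ℝ} (hc : 0 ≤ c) (ha : 0 < a) (hba : b < a) :
    ConvexOn ℝ (Set.Icc 0 1) (fun u => c / (a - u * b)) := by
  set φ : ℝ →ᵃ[ℝ] ℝ := AffineMap.const ℝ ℝ a - b • AffineMap.id ℝ ℝ
  have hφ : ∀ u, φ u = a - u * b := fun u => by simp [φ, mul_comm]
  have hpos : Set.Icc (0:ℝ) 1 ⊆ φ ⁻¹' Set.Ioi 0 := by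
    intro u hu
    rw [Set.mem_preimage, hφ, Set.mem_Ioi]
    rcases le_total b 0 with hb | hb <;> nlinarith [hu.1, hu.2]
  refine ((((convexOn_zpow (-1)).comp_affineMap φ).subset hpos (convex_Icc 0 1)).smul hc).congr
    fun u _ => ?_
  simp [hφ, div_eq_mul_inv]

theorem antitoneOn_div_sub_mul {a b c : ℝ} (hc : c ≤ 0) (hb : 0 ≤ b) (hba : b < a) :
    AntitoneOn (fun u => c / (a - u * b)) (Set.Icc 0 1) := by
  intro u hu v hv huv
  have hv' : 0 < a - v * b := by nlinarith [hv.2]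
  have hu' : 0 < a - u * b := by nlinarith [hu.1, hv.2]
  dsimp only
  rw [div_le_div_iff₀ hv' hu']
  nlinarith [mul_nonneg (sub_nonneg.2 huv) hb]

lemma mem_segment_update_zero_update_one {ι : Type*} [DecidableEq ι] (x : ι → ℝ) {t : ι}
    (ht : x t ∈ Set.Icc 0 1) :
    x ∈ segment ℝ (Function.update x t 0) (Function.update x t 1) := by
  refine ⟨1 - x t, x t, by linarith [ht.2], ht.1, by ring, funext fun i => ?_⟩
  rcases eq_or_ne i t with rfl | hit
  · simp
  · simp [hit]; ring

section BinaryRounding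

variable {ι : Type*} [Fintype ι]

def budgetBox (k : ℕ) : Set (ι → ℝ) := {x | (∀ i, x i ∈ Set.Icc 0 1) ∧ ∑ i, x i ≤ k}

def IsBinary (x : ι → ℝ) : Prop := ∀ i, x i = 0 ∨ x i = 1

open scoped Classical in
noncomputable def fracCoords (x : ι → ℝ) : Finset ι := {i | ¬ (x i = 0 ∨ x i = 1)}

lemma mem_fracCoords {x : ι → ℝ} {i : ι} : i ∈ fracCoords x ↔ ¬ (x i = 0 ∨ x i = 1) := by
  simp [fracCoords]

lemma mem_Ioo_of_mem_fracCoords {k : ℕ} {x : ι → ℝ} (hx : x ∈ budgetBox k) {i : ι}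
    (hi : i ∈ fracCoords x) : x i ∈ Set.Ioo 0 1 := by
  rw [mem_fracCoords, not_or] at hi
  exact ⟨(hx.1 i).1.lt_of_ne' hi.1, (hx.1 i).2.lt_of_ne hi.2⟩

lemma card_fracCoords_lt {x y : ι → ℝ} (hyx : ∀ i ∉ fracCoords x, y i = x i) {j : ι}
    (hj : j ∈ fracCoords x) (hyj : y j = 0 ∨ y j = 1) :
    (fracCoords y).card < (fracCoords x).card := by
  refine card_lt_card ((ssubset_iff_of_subset fun i hi => ?_).2
    ⟨j, hj, fun h => mem_fracCoords.1 h hyj⟩)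
  by_contra h
  rw [mem_fracCoords, hyx i h] at hi
  exact h (mem_fracCoords.2 hi)

lemma IsBinary.exists_sum_eq_natCast {x : ι → ℝ} (hx : IsBinary x) :
    ∃ n : ℕ, ∑ i, x i = n := by
  classical
  refine ⟨(univ.filter fun i => x i = 1).card, ?_⟩
  rw [natCast_card_filter]
  refine sum_congr rfl fun i _ => ?_
  rcases hx i with h | h <;> simp [h]

lemma update_mem_budgetBox_of_isBinary [DecidableEq ι] {k : ℕ} {x : ι → ℝ}
    (hx : x ∈ budgetBox k) {t : ι} (ht : t ∈ fracCoords x)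
    (hbin : IsBinary (Function.update x t 0)) {v : ℝ} (hv : v ∈ Set.Icc 0 1) :
    Function.update x t v ∈ budgetBox k := by
  obtain ⟨n, hn⟩ := hbin.exists_sum_eq_natCast
  have hsum : ∀ w, ∑ i, Function.update x t w i = w + ∑ i ∈ univ \ {t}, x i := fun w =>
    sum_update_of_mem (mem_univ t) _ _
  have hrest : ∑ i ∈ univ \ {t}, x i = n := by rw [← hn, hsum, zero_add]
  have hxsum : ∑ i, x i = x t + n := by rw [← hrest, ← hsum, Function.update_eq_self]
  have hnk : ((n + 1 : ℕ) : ℝ) ≤ k := by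
    have : (n : ℝ) < k := by linarith [hx.2, (mem_Ioo_of_mem_fracCoords hx ht).1]
    exact_mod_cast (show n < k by exact_mod_cast this)
  refine ⟨fun i => ?_, ?_⟩
  · rcases eq_or_ne i t with rfl | hi
    · simpa using hv
    · simpa [hi] using hx.1 i
  · push_cast at hnk
    rw [hsum, hrest]
    linarith [hv.2]

lemma exists_shift_mem_budgetBox [DecidableEq ι] {k : ℕ} {x : ι → ℝ} (hx : x ∈ budgetBox k)
    {s t : ι} (hst : s ≠ t) (hs : s ∈ fracCoords x) (ht : t ∈ fracCoords x) :
    ∃ ε : ℝ, 0 < ε ∧ x + ε • (Pi.single s 1 - Pi.single t 1) ∈ budgetBox k ∧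
      (fracCoords (x + ε • (Pi.single s 1 - Pi.single t 1))).card < (fracCoords x).card := by
  have hxs := mem_Ioo_of_mem_fracCoords hx hs
  have hxt := mem_Ioo_of_mem_fracCoords hx ht
  set ε := min (1 - x s) (x t)
  set y := x + ε • (Pi.single s 1 - Pi.single t 1 : ι → ℝ)
  have hys : y s = x s + ε := by simp [y, hst]
  have hyt : y t = x t - ε := by simp [y, hst.symm, sub_eq_add_neg]
  have hy : ∀ i, i ≠ s → i ≠ t → y i = x i := fun i his hit => by simp [y, his, hit]
  have hε : 0 < ε := lt_min (by linarith [hxs.2]) hxt.1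
  have hε₁ : ε ≤ 1 - x s := min_le_left _ _
  have hε₂ : ε ≤ x t := min_le_right _ _
  refine ⟨ε, hε, show y ∈ budgetBox k ∧ (fracCoords y).card < _ from ⟨⟨fun i => ?_, ?_⟩, ?_⟩⟩
  · rcases eq_or_ne i s with rfl | his
    · rw [hys]; constructor <;> linarith [hxs.1]
    rcases eq_or_ne i t with rfl | hit
    · rw [hyt]; constructor <;> linarith [hxt.2]
    rw [hy i his hit]; exact hx.1 i
  · simpa [y, sum_add_distrib, ← mul_sum, sum_sub_distrib] using hx.2
  · refine card_fracCoords_lt (fun i hi => hy i (ne_of_mem_of_not_mem hs hi).symm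
      (ne_of_mem_of_not_mem ht hi).symm) (j := if ε = 1 - x s then s else t) ?_ ?_
    · split_ifs <;> assumption
    · split_ifs with h
      · right; rw [hys, h]; ring
      · left; rw [hyt, show ε = x t from (min_choice _ _).resolve_left h]; ring

theorem budgetBox_subset_convexHull (k : ℕ) :
    budgetBox (ι := ι) k ⊆ convexHull ℝ {x ∈ budgetBox k | IsBinary x} := by
  classical
  intro x hx
  induction hn : (fracCoords x).card using Nat.strong_induction_on generalizing x with
  | _ n ih =>
  by_cases hbin : IsBinary x
  · exact subset_convexHull ℝ _ ⟨hx, hbin⟩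
  obtain ⟨t, ht⟩ : ∃ t, t ∈ fracCoords x := by
    simpa [IsBinary, mem_fracCoords] using hbin
  by_cases hone : ∀ s ∈ fracCoords x, s = t
  · have hupd : ∀ v : ℝ, (v = 0 ∨ v = 1) → IsBinary (Function.update x t v) := by
      intro v hv i
      rcases eq_or_ne i t with rfl | hit
      · simpa using hv
      · rw [Function.update_of_ne hit]
        by_contra h
        exact hit (hone i (mem_fracCoords.2 h))
    have hmem : ∀ v : ℝ, (v = 0 ∨ v = 1) →
        Function.update x t v ∈ {x ∈ budgetBox k | IsBinary x} := fun v hv =>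
      ⟨update_mem_budgetBox_of_isBinary hx ht (hupd 0 (Or.inl rfl))
        (by rcases hv with rfl | rfl <;> simp), hupd v hv⟩
    exact segment_subset_convexHull (hmem 0 (Or.inl rfl)) (hmem 1 (Or.inr rfl))
      (mem_segment_update_zero_update_one x (hx.1 t))
  · push Not at hone
    obtain ⟨s, hs, hst⟩ := hone
    obtain ⟨a, ha, hxa, hca⟩ := exists_shift_mem_budgetBox hx hst hs ht
    obtain ⟨b, hb, hxb, hcb⟩ := exists_shift_mem_budgetBox hx hst.symm ht hs
    have hseg :=
      mem_segment_add_smul_sub_smul x (Pi.single s 1 - Pi.single t 1 : ι → ℝ) ha.le hb.le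
    rw [sub_eq_add_neg x, ← smul_neg, neg_sub] at hseg
    exact (convex_convexHull ℝ _).segment_subset (ih _ (hn ▸ hca) hxa rfl)
      (ih _ (hn ▸ hcb) hxb rfl) hseg

theorem exists_isBinary_sum_le_of_convexOn (k : ℕ) {g : ι → ℝ → ℝ}
    (hg : ∀ i, ConvexOn ℝ (Set.Icc 0 1) (g i)) {x : ι → ℝ} (hx : x ∈ budgetBox k) :
    ∃ y ∈ budgetBox k, IsBinary y ∧ ∑ i, g i (x i) ≤ ∑ i, g i (y i) := by
  have hconv : ConvexOn ℝ {x : ι → ℝ | ∀ i, x i ∈ Set.Icc 0 1} fun x => ∑ i, g i (x i) := by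
    refine ⟨fun x hx y hy a b ha hb hab i => convex_Icc 0 1 (hx i) (hy i) ha hb hab,
      fun x hx y hy a b ha hb hab => ?_⟩
    simp only [Pi.add_apply, Pi.smul_apply, smul_eq_mul, mul_sum, ← sum_add_distrib]
    exact sum_le_sum fun i _ => (hg i).2 (hx i) (hy i) ha hb hab
  obtain ⟨y, ⟨hy, hybin⟩, hle⟩ :=
    hconv.exists_ge_of_mem_convexHull (fun y hy => hy.1.1) (budgetBox_subset_convexHull k hx)
  exact ⟨y, hy, hybin, hle⟩

theorem exists_isBinary_sum_le_of_convexOn_or_antitoneOn (k : ℕ) {g : ι → ℝ → ℝ}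
    (hg : ∀ i, ConvexOn ℝ (Set.Icc 0 1) (g i) ∨ AntitoneOn (g i) (Set.Icc 0 1))
    {x : ι → ℝ} (hx : x ∈ budgetBox k) :
    ∃ y ∈ budgetBox k, IsBinary y ∧ ∑ i, g i (x i) ≤ ∑ i, g i (y i) := by
  classical
  -- antitone coordinates are frozen at their maximum `g i 0` and rounded down to `0` afterwards
  let C i := ConvexOn ℝ (Set.Icc 0 1) (g i)
  let g' i := if C i then g i else fun _ => g i 0
  have hg' : ∀ i, ConvexOn ℝ (Set.Icc 0 1) (g' i) := fun i => by
    unfold g'; split_ifs with h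
    exacts [h, convexOn_const _ (convex_Icc 0 1)]
  obtain ⟨y, hy, hybin, hle⟩ := exists_isBinary_sum_le_of_convexOn k hg' hx
  refine ⟨fun i => if C i then y i else 0, ⟨fun i => ?_, ?_⟩, fun i => ?_, ?_⟩
  · dsimp only
    split_ifs
    exacts [hy.1 i, ⟨le_rfl, zero_le_one⟩]
  · refine (sum_le_sum fun i _ => ?_).trans hy.2
    split_ifs
    exacts [le_rfl, (hy.1 i).1]
  · dsimp only
    split_ifs
    exacts [hybin i, Or.inl rfl]
  · calc ∑ i, g i (x i) ≤ ∑ i, g' i (x i) := sum_le_sum fun i _ => by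
          unfold g'; split_ifs with h
          exacts [le_rfl, (hg i).resolve_left h ⟨le_rfl, zero_le_one⟩ (hx.1 i) (hx.1 i).1]
      _ ≤ ∑ i, g' i (y i) := hle
      _ = ∑ i, g i (if C i then y i else 0) := sum_congr rfl fun i _ => by
          unfold g'; split_ifs <;> rfl

end BinaryRounding

theorem convexOn_mul_add_div (m c D : ℝ) {s : Set ℝ} (hs : Convex ℝ s) :
    ConvexOn ℝ s fun u => (u * m + c) / D := by
  refine ⟨hs, fun x _ y _ a b _ _ hab => le_of_eq ?_⟩
  simp only [smul_eq_mul]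
  linear_combination (-(c / D)) * hab

lemma inAR_iff {T ΓA ΓD : ℕ} {p : (Fin T → ℝ) × (Fin T → ℝ)} :
    inAR T ΓA ΓD p ↔ p.1 ∈ budgetBox ΓA ∧ p.2 ∈ budgetBox ΓD :=
  ⟨fun ⟨hα, hγ, hsα, hsγ⟩ => ⟨⟨hα, hsα⟩, hγ, hsγ⟩, fun ⟨⟨hα, hsα⟩, hγ, hsγ⟩ => ⟨hα, hγ, hsα, hsγ⟩⟩

lemma inARB_iff {T ΓA ΓD : ℕ} {p : (Fin T → ℝ) × (Fin T → ℝ)} :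
    inARB T ΓA ΓD p ↔
      (p.1 ∈ budgetBox ΓA ∧ IsBinary p.1) ∧ (p.2 ∈ budgetBox ΓD ∧ IsBinary p.2) := by
  rw [inARB, inAR_iff, IsBinary, IsBinary]
  tauto

theorem exists_inARB_sum_le {T ΓA ΓD : ℕ} {Alo ΔA : Fin T → ℝ} (hΔA : ∀ t, 0 ≤ ΔA t)
    (hA : ∀ t, Alo t + ΔA t < 360) (φ ψ : Fin T → ℝ) {p : (Fin T → ℝ) × (Fin T → ℝ)}
    (hp : inAR T ΓA ΓD p) :
    ∃ q, inARB T ΓA ΓD q ∧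
      ∑ t, (p.2 t * φ t + ψ t) / (1.2 - (Alo t + p.1 t * ΔA t) / 300) ≤
        ∑ t, (q.2 t * φ t + ψ t) / (1.2 - (Alo t + q.1 t * ΔA t) / 300) := by
  obtain ⟨α, γ⟩ := p
  obtain ⟨hα, hγ⟩ := inAR_iff.1 hp
  have hden : ∀ t u, 1.2 - (Alo t + u * ΔA t) / 300 = (1.2 - Alo t / 300) - u * (ΔA t / 300) :=
    fun t u => by ring
  have hb : ∀ t, 0 ≤ ΔA t / 300 := fun t => div_nonneg (hΔA t) (by norm_num)
  have hba : ∀ t, ΔA t / 300 < 1.2 - Alo t / 300 := fun t => by linarith [hA t]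
  obtain ⟨γ', hγ', hγ'_bin, hγ_le⟩ := exists_isBinary_sum_le_of_convexOn ΓD
    (g := fun t u => (u * φ t + ψ t) / (1.2 - (Alo t + α t * ΔA t) / 300))
    (fun t => convexOn_mul_add_div _ _ _ (convex_Icc 0 1)) hγ
  obtain ⟨α', hα', hα'_bin, hα_le⟩ := exists_isBinary_sum_le_of_convexOn_or_antitoneOn ΓA
    (g := fun t u => (γ' t * φ t + ψ t) / (1.2 - (Alo t + u * ΔA t) / 300)) (fun t => by
      simp only [hden]
      rcases le_total 0 (γ' t * φ t + ψ t) with hc | hc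
      · exact .inl (convexOn_div_sub_mul hc ((hb t).trans_lt (hba t)) (hba t))
      · exact .inr (antitoneOn_div_sub_mul hc (hb t) (hba t))) hα
  exact ⟨(α', γ'), inARB_iff.2 ⟨⟨hα', hα'_bin⟩, hγ', hγ'_bin⟩, hγ_le.trans hα_le⟩

/-- Theorem 1 (analytical core): W*(𝔸^R) = W*(𝔸^{RB}). -/
theorem stmt_11 (T ΓA ΓD : ℕ) (Alo ΔA : Fin T → ℝ)
    (hΔA : ∀ t, 0 ≤ ΔA t) (hA : ∀ t, Alo t + ΔA t < 360)
    {D : Type*} [Nonempty D] (Ξ : D → ℝ) (Φ Ψ : D → Fin T → ℝ)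
    (Obj : D → ((Fin T → ℝ) × (Fin T → ℝ)) → ℝ)
    (hObj : ∀ d p, Obj d p =
      Ξ d + ∑ t, (p.2 t * Φ d t + Ψ d t) / (1.2 - (Alo t + p.1 t * ΔA t) / 300))
    (hbdd : BddAbove {z : ℝ | ∃ d p, inAR T ΓA ΓD p ∧ Obj d p = z}) :
    sSup {z : ℝ | ∃ d p, inAR T ΓA ΓD p ∧ Obj d p = z} =
      sSup {z : ℝ | ∃ d p, inARB T ΓA ΓD p ∧ Obj d p = z} := by
  set S := {z : ℝ | ∃ d p, inAR T ΓA ΓD p ∧ Obj d p = z}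
  set SB := {z : ℝ | ∃ d p, inARB T ΓA ΓD p ∧ Obj d p = z}
  have hSB : SB ⊆ S := fun _ ⟨d, p, hp, hz⟩ => ⟨d, p, hp.1, hz⟩
  have hSB_nonempty : SB.Nonempty :=
    ⟨_, Classical.arbitrary D, (0, 0), by simp [inARB, inAR], rfl⟩
  refine le_antisymm (csSup_le (hSB_nonempty.mono hSB) ?_) (csSup_le_csSup hbdd hSB_nonempty hSB)
  rintro _ ⟨d, p, hp, rfl⟩
  obtain ⟨q, hq, hle⟩ := exists_inARB_sum_le hΔA hA (Φ d) (Ψ d) hp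
  calc Obj d p ≤ Obj d q := by rw [hObj, hObj]; gcongr
    _ ≤ sSup SB := le_csSup (hbdd.mono hSB) ⟨d, q, hq, rfl⟩
end

section
/- Define f : ℝ → ℝ by f(a) := 1/(1.2 − a/300). Let Ψ₁, Ψ₂, Δ, a₁, a₂ ∈ ℝ with Ψ₁ > 0, Ψ₂ > 0, Δ > 0, a₁ + Δ < 360, a₂ + Δ < 360, and a₂ + Δ ≥ a₁. If Ψ₁·(f(a₁ + Δ) − f(a₁)) ≥ Ψ₂·(f(a₂ + Δ) − f(a₂)), then Ψ₁·f(a₁ + Δ) ≥ Ψ₂·f(a₂). -/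
/-!
Writing `f a = 1 / u a` with the affine denominator `u a = 1.2 - a / 300`, raising the
temperature by `Δ` lowers the denominator by `δ = Δ / 300`, and the gain is
`f (a + Δ) - f a = δ * f a * f (a + Δ)`. Dividing the hypothesis by `δ` compares the products
`Ψᵢ f(aᵢ) f(aᵢ + Δ)`; since `f` is increasing below `360` and `a₁ ≤ a₂ + Δ`, we may replace
`f a₁` by the larger `f (a₂ + Δ)`, and cancelling that common factor gives the claim.
-/

lemma inv_sub_inv_add_eq {K : Type*} [Field K] {y δ : K} (hy : y ≠ 0) (hyδ : y + δ ≠ 0) :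
    y⁻¹ - (y + δ)⁻¹ = δ * (y * (y + δ))⁻¹ := by
  rw [inv_sub_inv hy hyδ, add_sub_cancel_left, div_eq_mul_inv]

lemma mul_inv_add_le_of_mul_inv_sub_inv_add_le {𝕜 : Type*} [Field 𝕜] [LinearOrder 𝕜]
    [IsStrictOrderedRing 𝕜] {Ψ₁ Ψ₂ y₁ y₂ δ : 𝕜}
    (hΨ₁ : 0 < Ψ₁) (hy₁ : 0 < y₁) (hy₂ : 0 < y₂) (hδ : 0 < δ) (hy : y₂ ≤ y₁ + δ)
    (h : Ψ₂ * (y₂⁻¹ - (y₂ + δ)⁻¹) ≤ Ψ₁ * (y₁⁻¹ - (y₁ + δ)⁻¹)) :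
    Ψ₂ * (y₂ + δ)⁻¹ ≤ Ψ₁ * y₁⁻¹ := by
  have hy₁δ : 0 < y₁ + δ := by linarith
  have hy₂δ : 0 < y₂ + δ := by linarith
  rw [inv_sub_inv_add_eq hy₁.ne' hy₁δ.ne', inv_sub_inv_add_eq hy₂.ne' hy₂δ.ne', mul_left_comm Ψ₂,
    mul_left_comm Ψ₁, mul_le_mul_iff_right₀ hδ] at h
  have hprod : Ψ₂ * (y₂ * (y₂ + δ))⁻¹ ≤ Ψ₁ * (y₁ * y₂)⁻¹ :=
    h.trans (by gcongr)
  calc Ψ₂ * (y₂ + δ)⁻¹ = Ψ₂ * (y₂ * (y₂ + δ))⁻¹ * y₂ := by field_simp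
    _ ≤ Ψ₁ * (y₁ * y₂)⁻¹ * y₂ := by gcongr
    _ = Ψ₁ * y₁⁻¹ := by field_simp

theorem stmt_12_general (Ψ₁ Ψ₂ Δ a₁ a₂ : ℝ)
    (hΨ₁ : 0 < Ψ₁) (hΔ : 0 < Δ)
    (h₁ : a₁ + Δ < 360) (h₂ : a₂ + Δ < 360) (h₁₂ : a₁ ≤ a₂ + Δ)
    (f : ℝ → ℝ) (hf : ∀ a, f a = 1 / (1.2 - a / 300))
    (hgain : Ψ₂ * (f (a₂ + Δ) - f a₂) ≤ Ψ₁ * (f (a₁ + Δ) - f a₁)) :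
    Ψ₂ * f a₂ ≤ Ψ₁ * f (a₁ + Δ) := by
  set u : ℝ → ℝ := fun a ↦ 1.2 - a / 300 with hu_def
  have hfu : ∀ a, f a = (u a)⁻¹ := fun a ↦ by rw [hf, one_div]
  have hshift : ∀ a, u a = u (a + Δ) + Δ / 300 := fun a ↦ by simp only [hu_def]; ring
  have hpos : ∀ a, a < 360 → 0 < u a := fun a ha ↦ by simp only [hu_def]; linarith
  simp only [hfu] at hgain ⊢
  rw [hshift a₁, hshift a₂] at hgain
  rw [hshift a₂]
  exact mul_inv_add_le_of_mul_inv_sub_inv_add_le hΨ₁ (hpos _ h₁) (hpos _ h₂) (by positivity)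
    (by simp only [hu_def]; linarith) hgain

/-- Key inequality in the proof of Theorem 2. -/
theorem stmt_12 (Ψ₁ Ψ₂ Δ a₁ a₂ : ℝ)
    (hΨ₁ : 0 < Ψ₁) (hΨ₂ : 0 < Ψ₂) (hΔ : 0 < Δ)
    (h₁ : a₁ + Δ < 360) (h₂ : a₂ + Δ < 360) (h₁₂ : a₁ ≤ a₂ + Δ)
    (f : ℝ → ℝ) (hf : ∀ a, f a = 1 / (1.2 - a / 300))
    (hgain : Ψ₂ * (f (a₂ + Δ) - f a₂) ≤ Ψ₁ * (f (a₁ + Δ) - f a₁)) :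
    Ψ₂ * f a₂ ≤ Ψ₁ * f (a₁ + Δ) :=
  stmt_12_general Ψ₁ Ψ₂ Δ a₁ a₂ hΨ₁ hΔ h₁ h₂ h₁₂ f hf hgain
end

section
/- Fix T ∈ ℕ and integer budgets Γ^A, Γ^D ∈ ℕ. Let A̲, ΔA : Fin T → ℝ satisfy ΔA_t ≥ 0 and A̲_t + ΔA_t < 360 for all t, fix a lag l ∈ ℕ, and define 𝔸 := {(α,γ) : 0 ≤ α_t ≤ 1 and 0 ≤ γ_t ≤ 1 for all t, Σ_t α_t ≤ Γ^A, Σ_t γ_t ≤ Γ^D, and Σ_{τ=t}^{t+l} γ_τ ≥ α_t for every t with t + l ≤ T − 1}, 𝔸^R := the same set without the correlation constraints, and 𝔸^{RB} := {(α,γ) ∈ 𝔸^R : every α_t and γ_t equals 0 or 1}. Let Y be a nonempty finite set, f : Y → ℝ, let D be a nonempty set, and for each y ∈ Y let Ξ_y : D → ℝ and Φ_y, Ψ_y : D → (Fin T → ℝ), with Obj_y(d,α,γ) := Ξ_y(d) + Σ_t (γ_t·Φ_y(d)_t + Ψ_y(d)_t)/(1.2 − (A̲_t + α_t·ΔA_t)/300).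 Assume for every y ∈ Y that {Obj_y(d,α,γ) : d ∈ D, (α,γ) ∈ 𝔸^R} is bounded above, and define V(𝕌) := min over y ∈ Y of ( f(y) + sup{Obj_y(d,α,γ) : d ∈ D, (α,γ) ∈ 𝕌} ). Then V(𝔸) ≤ V(𝔸^R) = V(𝔸^{RB}). -/
/-!
For a fixed first-stage decision and dual point, the objective is `Ξ + ∑ₜ qₜ · gₜ(αₜ)` with
`gₜ(a) = (1.2 - (A̲ₜ + a ΔAₜ)/300)⁻¹` convex and nondecreasing on `[0, 1]`, and `qₜ` affine in `γₜ`.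
Replacing `gₜ` by its chord where `qₜ ≥ 0` and by `gₜ(0)` where `qₜ < 0` makes the objective
linear in `α`, and a linear function on `{x ∈ [0,1]ᵀ : ∑ x ≤ N}` is maximised at a 0/1 vector
(fractional knapsack: fill the `N` largest positive weights). Binarizing `α` and then `γ` this
way dominates every point of `𝔸^R` by one of `𝔸^{RB}`, so the two suprema agree; `𝔸 ⊆ 𝔸^R` gives
the inequality.
-/

open Finset

/-- The uncertainty set 𝔸 in deviation coordinates. -/
def inA (T l ΓA ΓD : ℕ) (p : (Fin T → ℝ) × (Fin T → ℝ)) : Prop :=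
  (∀ t, 0 ≤ p.1 t ∧ p.1 t ≤ 1) ∧ (∀ t, 0 ≤ p.2 t ∧ p.2 t ≤ 1) ∧
  (∑ t, p.1 t ≤ (ΓA : ℝ)) ∧ (∑ t, p.2 t ≤ (ΓD : ℝ)) ∧
  (∀ t : Fin T, (t : ℕ) + l ≤ T - 1 →
    p.1 t ≤ ∑ τ ∈ univ.filter (fun τ : Fin T => (t : ℕ) ≤ (τ : ℕ) ∧ (τ : ℕ) ≤ (t : ℕ) + l), p.2 τ)

theorem exists_reduced_budget {ι : Type*} [DecidableEq ι] {s : Finset ι} {i : ι}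
    (hi : i ∈ s) {w x : ι → ℝ} {N : ℕ} (hmax : ∀ t ∈ s, w t ≤ w i) (hwi : 0 ≤ w i)
    (hx : ∀ t ∈ s, x t ∈ Set.Icc 0 1) (hsum : ∑ t ∈ s, x t ≤ N + 1) :
    ∃ x' : ι → ℝ, (∀ t ∈ s.erase i, x' t ∈ Set.Icc 0 1) ∧ ∑ t ∈ s.erase i, x' t ≤ N ∧
      ∑ t ∈ s, w t * x t ≤ w i + ∑ t ∈ s.erase i, w t * x' t := by
  rw [← add_sum_erase s _ hi] at hsum ⊢
  have hxi := hx i hi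
  have hx' : ∀ t ∈ s.erase i, x t ∈ Set.Icc 0 1 := fun t ht => hx t (mem_of_mem_erase ht)
  set σ := ∑ t ∈ s.erase i, x t
  by_cases hσ : σ ≤ N
  · exact ⟨x, hx', hσ, by nlinarith [hxi.2]⟩
  -- otherwise scale the remaining mass down to `N`; each unit removed is worth at most `w i`
  push Not at hσ
  have hσ0 : 0 < σ := (Nat.cast_nonneg N).trans_lt hσ
  set c := (N : ℝ) / σ
  have hc1 : c ≤ 1 := (div_le_one hσ0).2 hσ.le
  have hcσ : c * σ = N := div_mul_cancel₀ _ hσ0.ne'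
  refine ⟨fun t => c * x t, fun t ht => ⟨?_, ?_⟩, ?_, ?_⟩
  · exact mul_nonneg (div_nonneg (Nat.cast_nonneg N) hσ0.le) (hx' t ht).1
  · exact (mul_le_of_le_one_left (hx' t ht).1 hc1).trans (hx' t ht).2
  · rw [← mul_sum, hcσ]
  · have hrest : ∑ t ∈ s.erase i, w t * x t ≤
        w i * ((1 - c) * σ) + ∑ t ∈ s.erase i, w t * (c * x t) := by
      rw [mul_sum, mul_sum, ← sum_add_distrib]
      refine sum_le_sum fun t ht => ?_
      have := mul_le_mul_of_nonneg_right (hmax t (mem_of_mem_erase ht))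
        (mul_nonneg (sub_nonneg.2 hc1) (hx' t ht).1)
      linarith
    nlinarith

theorem exists_subset_card_le_sum_mul_le_sum {ι : Type*} [DecidableEq ι] (N : ℕ)
    (s : Finset ι) (w x : ι → ℝ) (hx : ∀ t ∈ s, x t ∈ Set.Icc 0 1) (hsum : ∑ t ∈ s, x t ≤ N) :
    ∃ K ⊆ s, #K ≤ N ∧ ∑ t ∈ s, w t * x t ≤ ∑ t ∈ K, w t := by
  induction N generalizing s x with
  | zero =>
    have hx0 : ∀ t ∈ s, x t = 0 :=
      (sum_eq_zero_iff_of_nonneg fun t ht => (hx t ht).1).1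
        (le_antisymm (by simpa using hsum) (sum_nonneg fun t ht => (hx t ht).1))
    exact ⟨∅, empty_subset _, le_rfl, by simp +contextual [hx0]⟩
  | succ N ih =>
    rcases s.eq_empty_or_nonempty with rfl | hs
    · exact ⟨∅, empty_subset _, by simp, by simp⟩
    obtain ⟨i, hi, hmax⟩ := s.exists_max_image w hs
    by_cases hwi : w i ≤ 0
    · refine ⟨∅, empty_subset _, by simp, ?_⟩
      exact sum_nonpos fun t ht =>
        mul_nonpos_of_nonpos_of_nonneg ((hmax t ht).trans hwi) (hx t ht).1
    push Not at hwi
    obtain ⟨x', hx', hsum', hle⟩ :=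
      exists_reduced_budget hi hmax hwi.le hx (by exact_mod_cast hsum)
    obtain ⟨K, hKs, hKcard, hK⟩ := ih (s.erase i) x' hx' hsum'
    have hiK : i ∉ K := fun h => notMem_erase i s (hKs h)
    refine ⟨insert i K, insert_subset hi (hKs.trans (erase_subset i s)), ?_, ?_⟩
    · exact (card_insert_le i K).trans (by omega)
    · rw [sum_insert hiK]
      linarith

theorem exists_binary_card_le_sum_mul_le {ι : Type*} [Fintype ι] (N : ℕ) (w x : ι → ℝ)
    (hx : ∀ t, x t ∈ Set.Icc 0 1) (hsum : ∑ t, x t ≤ N) :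
    ∃ b : ι → ℝ, (∀ t, b t = 0 ∨ b t = 1) ∧ ∑ t, b t ≤ N ∧
      ∑ t, w t * x t ≤ ∑ t, w t * b t := by
  classical
  obtain ⟨K, -, hKcard, hK⟩ :=
    exists_subset_card_le_sum_mul_le_sum N univ w x (fun t _ => hx t) hsum
  refine ⟨fun t => if t ∈ K then 1 else 0, fun t => ?_, ?_, ?_⟩
  · dsimp only; split_ifs <;> simp
  · simpa [sum_boole] using hKcard
  · simpa [mul_ite, sum_ite_mem] using hK

theorem ConvexOn.le_chord_of_mem_unitInterval {φ : ℝ → ℝ} (hφ : ConvexOn ℝ (Set.Icc 0 1) φ)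
    {a : ℝ} (ha : a ∈ Set.Icc 0 1) : φ a ≤ φ 0 + a * (φ 1 - φ 0) := by
  have h := hφ.2 (Set.left_mem_Icc.2 zero_le_one) (Set.right_mem_Icc.2 zero_le_one)
    (sub_nonneg.2 ha.2) ha.1 (sub_add_cancel 1 a)
  simp only [smul_eq_mul, mul_zero, zero_add, mul_one] at h
  linarith

theorem convexOn_inv_affine {m k : ℝ} {s : Set ℝ} (hs : Convex ℝ s)
    (hpos : ∀ a ∈ s, 0 < m * a + k) : ConvexOn ℝ s fun a => (m * a + k)⁻¹ := by
  refine ⟨hs, fun a ha b hb u v hu hv huv => ?_⟩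
  have h := (convexOn_zpow (𝕜 := ℝ) (-1)).2 (hpos a ha) (hpos b hb) hu hv huv
  simp only [zpow_neg_one, smul_eq_mul] at h ⊢
  rwa [show m * (u * a + v * b) + k = u * (m * a + k) + v * (m * b + k) by
    linear_combination (-k) * huv]

theorem monotoneOn_inv_affine {m k : ℝ} {s : Set ℝ} (hm : m ≤ 0)
    (hpos : ∀ a ∈ s, 0 < m * a + k) : MonotoneOn (fun a => (m * a + k)⁻¹) s :=
  fun a _ b hb hab => inv_anti₀ (hpos b hb) (by nlinarith)

theorem binary_mem_unitInterval {b : ℝ} (hb : b = 0 ∨ b = 1) : b ∈ Set.Icc (0 : ℝ) 1 := by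
  rcases hb with rfl | rfl <;> simp

theorem exists_binary_card_le_sum_mul_comp_le {ι : Type*} [Fintype ι] (N : ℕ) (q α : ι → ℝ)
    {g : ι → ℝ → ℝ} (hconv : ∀ t, ConvexOn ℝ (Set.Icc 0 1) (g t))
    (hmono : ∀ t, MonotoneOn (g t) (Set.Icc 0 1))
    (hα : ∀ t, α t ∈ Set.Icc 0 1) (hsum : ∑ t, α t ≤ N) :
    ∃ b : ι → ℝ, (∀ t, b t = 0 ∨ b t = 1) ∧ ∑ t, b t ≤ N ∧
      ∑ t, q t * g t (α t) ≤ ∑ t, q t * g t (b t) := by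
  set x : ι → ℝ := fun t => if 0 ≤ q t then α t else 0
  set w : ι → ℝ := fun t => q t * (g t 1 - g t 0)
  have hx : ∀ t, x t ∈ Set.Icc 0 1 := fun t => by
    by_cases hq : 0 ≤ q t <;> simp [x, hq, hα t]
  have hxsum : ∑ t, x t ≤ N := (sum_le_sum fun t _ => by
    by_cases hq : 0 ≤ q t <;> simp [x, hq, (hα t).1]).trans hsum
  have hlin : ∀ t, q t * g t (α t) ≤ q t * g t 0 + w t * x t := fun t => by
    by_cases hq : 0 ≤ q t
    · simp only [x, w, if_pos hq]
      nlinarith [(hconv t).le_chord_of_mem_unitInterval (hα t)]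
    · simp only [x, w, if_neg hq, mul_zero, add_zero]
      exact mul_le_mul_of_nonpos_left
        (hmono t (Set.left_mem_Icc.2 zero_le_one) (hα t) (hα t).1) (not_le.1 hq).le
  obtain ⟨b, hb, hbsum, hle⟩ := exists_binary_card_le_sum_mul_le N w x hx hxsum
  have hbin : ∀ t, q t * g t 0 + w t * b t = q t * g t (b t) := fun t => by
    rcases hb t with h | h <;> simp only [w, h] <;> ring
  refine ⟨b, hb, hbsum, ?_⟩
  calc ∑ t, q t * g t (α t)
      ≤ ∑ t, (q t * g t 0 + w t * x t) := sum_le_sum fun t _ => hlin t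
    _ ≤ ∑ t, (q t * g t 0 + w t * b t) := by
      rw [sum_add_distrib, sum_add_distrib]
      gcongr
    _ = ∑ t, q t * g t (b t) := sum_congr rfl fun t _ => hbin t

theorem inAR.exists_inARB_le {T ΓA ΓD : ℕ} {g : Fin T → ℝ → ℝ}
    (hconv : ∀ t, ConvexOn ℝ (Set.Icc 0 1) (g t)) (hmono : ∀ t, MonotoneOn (g t) (Set.Icc 0 1))
    (Φ Ψ : Fin T → ℝ) {p : (Fin T → ℝ) × (Fin T → ℝ)} (hp : inAR T ΓA ΓD p) :
    ∃ q, inARB T ΓA ΓD q ∧ ∑ t, (p.2 t * Φ t + Ψ t) * g t (p.1 t) ≤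
      ∑ t, (q.2 t * Φ t + Ψ t) * g t (q.1 t) := by
  obtain ⟨hα, hγ, hαsum, hγsum⟩ := hp
  obtain ⟨α, hαb, hαbsum, hαle⟩ :=
    exists_binary_card_le_sum_mul_comp_le ΓA (fun t => p.2 t * Φ t + Ψ t) p.1 hconv hmono hα
      hαsum
  obtain ⟨γ, hγb, hγbsum, hγle⟩ :=
    exists_binary_card_le_sum_mul_le ΓD (fun t => Φ t * g t (α t)) p.2 hγ hγsum
  have hsplit : ∀ c : Fin T → ℝ, ∑ t, (c t * Φ t + Ψ t) * g t (α t) =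
      ∑ t, Ψ t * g t (α t) + ∑ t, Φ t * g t (α t) * c t := fun c => by
    rw [← sum_add_distrib]
    exact sum_congr rfl fun t _ => by ring
  refine ⟨(α, γ), ⟨⟨fun t => binary_mem_unitInterval (hαb t),
    fun t => binary_mem_unitInterval (hγb t), hαbsum, hγbsum⟩, hαb, hγb⟩, ?_⟩
  calc ∑ t, (p.2 t * Φ t + Ψ t) * g t (p.1 t)
      ≤ ∑ t, (p.2 t * Φ t + Ψ t) * g t (α t) := hαle
    _ ≤ ∑ t, (γ t * Φ t + Ψ t) * g t (α t) := by
      rw [hsplit, hsplit]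
      gcongr

theorem inA.inAR {T l ΓA ΓD : ℕ} {p : (Fin T → ℝ) × (Fin T → ℝ)} (hp : inA T l ΓA ΓD p) :
    inAR T ΓA ΓD p :=
  ⟨hp.1, hp.2.1, hp.2.2.1, hp.2.2.2.1⟩

theorem inA_zero (T l ΓA ΓD : ℕ) : inA T l ΓA ΓD 0 := by
  refine ⟨fun _ => ?_, fun _ => ?_, ?_, ?_, fun _ _ => ?_⟩ <;> simp

theorem stmt_15_general (T l ΓA ΓD : ℕ) (Alo ΔA : Fin T → ℝ)
    (hΔA : ∀ t, 0 ≤ ΔA t) (hA : ∀ t, Alo t + ΔA t < 360)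
    {Y : Type*} [Fintype Y] (f : Y → ℝ)
    {D : Type*} [Nonempty D] (Ξ : Y → D → ℝ) (Φ Ψ : Y → D → Fin T → ℝ)
    (Obj : Y → D → ((Fin T → ℝ) × (Fin T → ℝ)) → ℝ)
    (hObj : ∀ y d p, Obj y d p =
      Ξ y d + ∑ t, (p.2 t * Φ y d t + Ψ y d t) / (1.2 - (Alo t + p.1 t * ΔA t) / 300))
    (hbdd : ∀ y : Y, BddAbove {z : ℝ | ∃ d p, inAR T ΓA ΓD p ∧ Obj y d p = z}) :
    (⨅ y : Y, (f y + sSup {z : ℝ | ∃ d p, inA T l ΓA ΓD p ∧ Obj y d p = z})) ≤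
      (⨅ y : Y, (f y + sSup {z : ℝ | ∃ d p, inAR T ΓA ΓD p ∧ Obj y d p = z})) ∧
    (⨅ y : Y, (f y + sSup {z : ℝ | ∃ d p, inAR T ΓA ΓD p ∧ Obj y d p = z})) =
      (⨅ y : Y, (f y + sSup {z : ℝ | ∃ d p, inARB T ΓA ΓD p ∧ Obj y d p = z})) := by
  set g : Fin T → ℝ → ℝ := fun t a => (-(ΔA t / 300) * a + (1.2 - Alo t / 300))⁻¹
  have hObj' : ∀ y d p, Obj y d p = Ξ y d + ∑ t, (p.2 t * Φ y d t + Ψ y d t) * g t (p.1 t) :=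
    fun y d p => by
      rw [hObj]
      congr 1
      exact sum_congr rfl fun t _ => by rw [div_eq_mul_inv]; congr 2; ring
  have hden : ∀ t, ∀ a ∈ Set.Icc (0 : ℝ) 1, 0 < -(ΔA t / 300) * a + (1.2 - Alo t / 300) :=
    fun t a ha => by nlinarith [hA t, hΔA t, ha.2]
  have hconv t : ConvexOn ℝ (Set.Icc 0 1) (g t) := convexOn_inv_affine (convex_Icc 0 1) (hden t)
  have hmono t : MonotoneOn (g t) (Set.Icc 0 1) :=
    monotoneOn_inv_affine (neg_nonpos.2 (div_nonneg (hΔA t) (by norm_num))) (hden t)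
  obtain ⟨d₀⟩ := ‹Nonempty D›
  refine ⟨ciInf_mono (Set.finite_range _).bddBelow fun y => ?_, iInf_congr fun y => ?_⟩
  · gcongr
    · exact hbdd y
    · exact ⟨_, d₀, 0, inA_zero T l ΓA ΓD, rfl⟩
    · exact inA.inAR
  · congr 1
    apply csSup_eq_csSup_of_forall_exists_le
    · rintro _ ⟨d, p, hp, rfl⟩
      obtain ⟨q, hq, hle⟩ := hp.exists_inARB_le hconv hmono (Φ y d) (Ψ y d)
      exact ⟨_, ⟨d, q, hq, rfl⟩, by rw [hObj', hObj']; linarith⟩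
    · rintro _ ⟨d, p, hp, rfl⟩
      exact ⟨_, ⟨d, p, hp.1, rfl⟩, le_rfl⟩

/-- Corollary 2 (abstract form): V(𝔸) ≤ V(𝔸^R) = V(𝔸^{RB}). -/
theorem stmt_15 (T l ΓA ΓD : ℕ) (Alo ΔA : Fin T → ℝ)
    (hΔA : ∀ t, 0 ≤ ΔA t) (hA : ∀ t, Alo t + ΔA t < 360)
    {Y : Type*} [Fintype Y] [Nonempty Y] (f : Y → ℝ)
    {D : Type*} [Nonempty D] (Ξ : Y → D → ℝ) (Φ Ψ : Y → D → Fin T → ℝ)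
    (Obj : Y → D → ((Fin T → ℝ) × (Fin T → ℝ)) → ℝ)
    (hObj : ∀ y d p, Obj y d p =
      Ξ y d + ∑ t, (p.2 t * Φ y d t + Ψ y d t) / (1.2 - (Alo t + p.1 t * ΔA t) / 300))
    (hbdd : ∀ y : Y, BddAbove {z : ℝ | ∃ d p, inAR T ΓA ΓD p ∧ Obj y d p = z}) :
    (⨅ y : Y, (f y + sSup {z : ℝ | ∃ d p, inA T l ΓA ΓD p ∧ Obj y d p = z})) ≤
      (⨅ y : Y, (f y + sSup {z : ℝ | ∃ d p, inAR T ΓA ΓD p ∧ Obj y d p = z})) ∧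
    (⨅ y : Y, (f y + sSup {z : ℝ | ∃ d p, inAR T ΓA ΓD p ∧ Obj y d p = z})) =
      (⨅ y : Y, (f y + sSup {z : ℝ | ∃ d p, inARB T ΓA ΓD p ∧ Obj y d p = z})) :=
  stmt_15_general T l ΓA ΓD Alo ΔA hΔA hA f Ξ Φ Ψ Obj hObj hbdd
end
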